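/- A function f : (k+1)^E → ℝ is k-submodular if and only if it is orthant submodular and pairwise monotone. -/

import Mathlib

open Finset

/-- Join `⊔` on `(k+1)^E`, where a `k`-tuple of pairwise disjoint subsets of `E`
is represented as a function `E → Option (Fin k)`. -/
def ksup {E : Type*} {k : ℕ} (x y : E → Option (Fin k)) : E → Option (Fin k) :=
  fun e => match x e, y e with
  | none, b => b
  | some i, none => some i
  | some i, some j => if i = j then some i else none

/-- Meet `⊓` on `(k+1)^E`. -/
def kinf {E : Type*} {k : ℕ} (x y : E → Option (Fin k)) : E → Option (Fin k) :=
  fun e => match x e, y e with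
  | some i, some j => if i = j then some i else none
  | _, _ => none

/-- The partial order `x ⪯ y` : `X_i ⊆ Y_i` for all `i`. -/
def kle {E : Type*} {k : ℕ} (x y : E → Option (Fin k)) : Prop :=
  ∀ e i, x e = some i → y e = some i

/-- `I_{[e,i]}`: the `k`-tuple with `{e}` in coordinate `i` and `∅` elsewhere. -/
def ksingle {E : Type*} [DecidableEq E] {k : ℕ} (e : E) (i : Fin k) : E → Option (Fin k) :=
  fun e' => if e' = e then some i else none

/-- Marginal gain `Δ_{e,i} f(x) = f(x ⊔ I_{[e,i]}) - f(x)`. -/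
def marg {E : Type*} [DecidableEq E] {k : ℕ} (f : (E → Option (Fin k)) → ℝ)
    (x : E → Option (Fin k)) (e : E) (i : Fin k) : ℝ :=
  f (ksup x (ksingle e i)) - f x

/-- `f` is `k`-submodular: `f(x⊔y) + f(x⊓y) ≤ f(x) + f(y)`. -/
def KSubmodular {E : Type*} {k : ℕ} (f : (E → Option (Fin k)) → ℝ) : Prop :=
  ∀ x y, f (ksup x y) + f (kinf x y) ≤ f x + f y

/-- The support `P(x) = ⋃ᵢ Xᵢ` as a finset. -/
def suppK {E : Type*} [Fintype E] {k : ℕ} (x : E → Option (Fin k)) : Finset E :=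
  Finset.univ.filter fun e => x e ≠ none

/-- Orthant submodularity. -/
def OrthantSubmodular {E : Type*} [DecidableEq E] {k : ℕ}
    (f : (E → Option (Fin k)) → ℝ) : Prop :=
  ∀ x y, kle x y → ∀ e, y e = none → ∀ i, marg f y e i ≤ marg f x e i

/-- Pairwise monotonicity. -/
def PairwiseMonotone {E : Type*} [DecidableEq E] {k : ℕ}
    (f : (E → Option (Fin k)) → ℝ) : Prop :=
  ∀ x e, x e = none → ∀ i j : Fin k, i ≠ j → 0 ≤ marg f x e i + marg f x e j

/-- Monotonicity with respect to `⪯`. -/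
def KMonotone {E : Type*} {k : ℕ} (f : (E → Option (Fin k)) → ℝ) : Prop :=
  ∀ x y, kle x y → f x ≤ f y

/-!
Orthant submodularity and pairwise monotonicity yield `f (x ⊔ y) + f (x ⊓ y) ≤ f x + f y` by
shrinking `x` and `y` one element at a time without changing `x ⊓ y`. First every element that
`x` and `y` place in different coordinates is removed from `x`; each removal is paid for by
pairwise monotonicity at a common upper bound of the smaller `x` and of `x ⊔ y`. Once `x` and `y`
are compatible, the elements of `y` outside the support of `x` are removed from `y`, each one
paid for by orthant submodularity alone. This ends with `y ⪯ x`, where the inequality is an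
equality. Conversely, both conditions are instances of `k`-submodularity, for the pairs
`(x ⊔ I_{[e,i]}, y)` with `x ⪯ y` and `(x ⊔ I_{[e,i]}, x ⊔ I_{[e,j]})`.
-/

open Function

section Lattice

variable {E : Type*} {k : ℕ} {x x' y y' : E → Option (Fin k)} {e : E} {i j : Fin k}

def KCompatible (x y : E → Option (Fin k)) : Prop :=
  ∀ a i j, x a = some i → y a = some j → i = j

theorem KCompatible.mono_left (h : KCompatible x y) (hx : kle x' x) : KCompatible x' y :=
  fun a i j hi hj => h a i j (hx a i hi) hj

theorem KCompatible.mono_right (h : KCompatible x y) (hy : kle y' y) : KCompatible x y' :=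
  fun a i j hi hj => h a i j hi (hy a j hj)

theorem kCompatible_ksup (x y : E → Option (Fin k)) : KCompatible x (ksup x y) := by
  intro a i j hi hj
  cases hy : y a with
  | none => simpa [ksup, hi, hy] using hj
  | some c => by_cases hc : i = c <;> simp_all [ksup]

theorem kle_ksup_left (h : KCompatible x y) : kle x (ksup x y) := by
  intro a i hi
  cases hy : y a with
  | none => simp [ksup, hi, hy]
  | some j => simp [ksup, hi, hy, h a i j hi hy]

theorem kle_ksup_right (h : KCompatible x y) : kle y (ksup x y) := by
  intro a j hj
  cases hx : x a with
  | none => simp [ksup, hx, hj]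
  | some i => simp [ksup, hx, hj, h a i j hx hj]

theorem ksup_of_kle (h : kle y x) : ksup x y = x := by
  funext a
  cases hy : y a with
  | none => cases hx : x a <;> simp [ksup, hx, hy]
  | some j => simp [ksup, h a j hy, hy]

theorem kinf_of_kle (h : kle y x) : kinf x y = y := by
  funext a
  cases hy : y a with
  | none => cases hx : x a <;> simp [kinf, hx, hy]
  | some j => simp [kinf, h a j hy, hy]

theorem eq_none_of_kle (h : kle x y) (hy : y e = none) : x e = none := by
  cases hx : x e with
  | none => rfl
  | some i => simp [h e i hx] at hy

variable [DecidableEq E]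

theorem kle_update_none (x : E → Option (Fin k)) (e : E) : kle (update x e none) x := by
  intro a i hi
  by_cases ha : a = e
  · simp [ha] at hi
  · rwa [update_of_ne ha] at hi

theorem update_update_none_of_eq (h : x e = some i) : update (update x e none) e (some i) = x := by
  rw [update_idem, ← h, update_eq_self]

theorem ksup_update_none_left : ksup (update x e none) y = update (ksup x y) e (y e) := by
  funext a
  by_cases ha : a = e
  · subst ha; simp [ksup]
  · simp [ksup, ha]

theorem ksup_update_none_right : ksup x (update y e none) = update (ksup x y) e (x e) := by
  funext a
  by_cases ha : a = e
  · subst ha; cases hx : x a <;> simp [ksup, hx]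
  · simp [ksup, ha]

theorem kinf_update_none_left (h : kinf x y e = none) : kinf (update x e none) y = kinf x y := by
  funext a
  by_cases ha : a = e
  · subst ha; rw [h]; simp [kinf]
  · simp [kinf, ha]

theorem kinf_update_none_right (h : kinf x y e = none) : kinf x (update y e none) = kinf x y := by
  funext a
  by_cases ha : a = e
  · subst ha; rw [h]; cases hx : x a <;> simp [kinf, hx]
  · simp [kinf, ha]

theorem ksup_ksingle (h : x e = none) (i : Fin k) : ksup x (ksingle e i) = update x e (some i) := by
  funext a
  by_cases ha : a = e
  · subst ha; simp [ksup, ksingle, h]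
  · cases hx : x a <;> simp [ksup, ksingle, ha, hx]

theorem marg_eq_of_eq_none (f : (E → Option (Fin k)) → ℝ) (h : x e = none) (i : Fin k) :
    marg f x e i = f (update x e (some i)) - f x := by
  rw [marg, ksup_ksingle h]

theorem ksup_update_some_of_kle (hle : kle x y) (hy : y e = none) (i : Fin k) :
    ksup (update x e (some i)) y = update y e (some i) := by
  funext a
  by_cases ha : a = e
  · subst ha; simp [ksup, hy]
  · cases hx : x a with
    | none => cases hy : y a <;> simp [ksup, ha, hx, hy]
    | some c => simp [ksup, ha, hx, hle a c hx]

theorem kinf_update_some_of_kle (hle : kle x y) (hy : y e = none) (i : Fin k) :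
    kinf (update x e (some i)) y = x := by
  funext a
  by_cases ha : a = e
  · subst ha; simp [kinf, hy, eq_none_of_kle hle hy]
  · cases hx : x a with
    | none => cases hy : y a <;> simp [kinf, ha, hx, hy]
    | some c => simp [kinf, ha, hx, hle a c hx]

theorem ksup_update_some_update_some (hx : x e = none) (hij : i ≠ j) :
    ksup (update x e (some i)) (update x e (some j)) = x := by
  funext a
  by_cases ha : a = e
  · subst ha; simp [ksup, hij, hx]
  · cases hx : x a <;> simp [ksup, ha, hx]

theorem kinf_update_some_update_some (hx : x e = none) (hij : i ≠ j) :
    kinf (update x e (some i)) (update x e (some j)) = x := by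
  funext a
  by_cases ha : a = e
  · subst ha; simp [kinf, hij, hx]
  · cases hx : x a <;> simp [kinf, ha, hx]

theorem card_suppK_update_none_lt [Fintype E] (h : x e ≠ none) :
    #(suppK (update x e none)) < #(suppK x) := by
  have hsupp : suppK (update x e none) = (suppK x).erase e := by
    ext a
    by_cases ha : a = e <;> simp [suppK, ha]
  rw [hsupp]
  exact card_erase_lt_of_mem (by simpa [suppK] using h)

end Lattice

section Submodularity

variable {E : Type*} [DecidableEq E] {k : ℕ} {f : (E → Option (Fin k)) → ℝ}
  {x y : E → Option (Fin k)} {e : E} {i j : Fin k}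

theorem KSubmodular.orthantSubmodular (hf : KSubmodular f) : OrthantSubmodular f := by
  intro x y hle e hy i
  have h := hf (update x e (some i)) y
  rw [ksup_update_some_of_kle hle hy, kinf_update_some_of_kle hle hy] at h
  rw [marg_eq_of_eq_none f hy, marg_eq_of_eq_none f (eq_none_of_kle hle hy)]
  linarith

theorem KSubmodular.pairwiseMonotone (hf : KSubmodular f) : PairwiseMonotone f := by
  intro x e hx i j hij
  have h := hf (update x e (some i)) (update x e (some j))
  rw [ksup_update_some_update_some hx hij, kinf_update_some_update_some hx hij] at h
  rw [marg_eq_of_eq_none f hx, marg_eq_of_eq_none f hx]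
  linarith

theorem OrthantSubmodular.marg_add_marg_nonneg (hOS : OrthantSubmodular f)
    (hPM : PairwiseMonotone f) (hxy : KCompatible x y) (hx : x e = none) (hy : y e = none)
    (hij : i ≠ j) : 0 ≤ marg f x e i + marg f y e j := by
  have hz : ksup x y e = none := by simp [ksup, hx, hy]
  have hi := hOS x _ (kle_ksup_left hxy) e hz i
  have hj := hOS y _ (kle_ksup_right hxy) e hz j
  have hsum := hPM _ e hz i j hij
  linarith

theorem OrthantSubmodular.ksubmodular_ineq_of_update_none_left (hOS : OrthantSubmodular f)
    (hPM : PairwiseMonotone f) (hx : x e = some i) (hy : y e = some j) (hij : i ≠ j)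
    (h : f (ksup (update x e none) y) + f (kinf (update x e none) y) ≤
      f (update x e none) + f y) :
    f (ksup x y) + f (kinf x y) ≤ f x + f y := by
  have hsup : ksup x y e = none := by simp [ksup, hx, hy, hij]
  have hinf : kinf x y e = none := by simp [kinf, hx, hy, hij]
  rw [kinf_update_none_left hinf, ksup_update_none_left, hy] at h
  have hgain := hOS.marg_add_marg_nonneg hPM
    ((kCompatible_ksup x y).mono_left (kle_update_none x e)) (update_self ..) hsup hij
  rw [marg_eq_of_eq_none f (update_self ..), marg_eq_of_eq_none f hsup,
    update_update_none_of_eq hx] at hgain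
  linarith

theorem OrthantSubmodular.ksubmodular_ineq_of_update_none_right (hOS : OrthantSubmodular f)
    (hxy : KCompatible x y) (hx : x e = none) (hy : y e = some j)
    (h : f (ksup x (update y e none)) + f (kinf x (update y e none)) ≤
      f x + f (update y e none)) :
    f (ksup x y) + f (kinf x y) ≤ f x + f y := by
  have hsup : ksup x y e = some j := by simp [ksup, hx, hy]
  have hsup' : ksup x (update y e none) = update (ksup x y) e none := by
    rw [ksup_update_none_right, hx]
  rw [kinf_update_none_right (by simp [kinf, hx]), hsup'] at h
  have hle : kle (update y e none) (update (ksup x y) e none) :=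
    hsup' ▸ kle_ksup_right (hxy.mono_right (kle_update_none y e))
  have hgain := hOS _ _ hle e (update_self ..) j
  rw [marg_eq_of_eq_none f (update_self ..), marg_eq_of_eq_none f (update_self ..),
    update_update_none_of_eq hsup, update_update_none_of_eq hy] at hgain
  linarith

theorem OrthantSubmodular.ksubmodular_ineq_of_kCompatible [Fintype E]
    (hOS : OrthantSubmodular f) (x y : E → Option (Fin k)) (hxy : KCompatible x y) :
    f (ksup x y) + f (kinf x y) ≤ f x + f y := by
  by_cases hle : kle y x
  · rw [ksup_of_kle hle, kinf_of_kle hle]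
  · obtain ⟨e, j, hy, hx⟩ : ∃ e j, y e = some j ∧ x e = none := by
      obtain ⟨e, j, hy, hx⟩ : ∃ e j, y e = some j ∧ x e ≠ some j := by
        simpa [kle] using hle
      refine ⟨e, j, hy, ?_⟩
      cases hxe : x e with
      | none => rfl
      | some i => exact absurd (hxy e i j hxe hy ▸ hxe) hx
    exact hOS.ksubmodular_ineq_of_update_none_right hxy hx hy
      (hOS.ksubmodular_ineq_of_kCompatible x _ (hxy.mono_right (kle_update_none y e)))
termination_by #(suppK y)
decreasing_by exact card_suppK_update_none_lt (by simp [hy])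

theorem OrthantSubmodular.ksubmodular [Fintype E] (hOS : OrthantSubmodular f)
    (hPM : PairwiseMonotone f) : KSubmodular f := fun x y => by
  by_cases hxy : KCompatible x y
  · exact hOS.ksubmodular_ineq_of_kCompatible x y hxy
  · obtain ⟨e, i, j, hx, hy, hij⟩ : ∃ e i j, x e = some i ∧ y e = some j ∧ i ≠ j := by
      simpa [KCompatible] using hxy
    exact hOS.ksubmodular_ineq_of_update_none_left hPM hx hy hij
      (hOS.ksubmodular hPM (update x e none) y)
termination_by x _ => #(suppK x)
decreasing_by exact card_suppK_update_none_lt (by simp [hx])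

end Submodularity

theorem stmt_4 {E : Type*} [Fintype E] [DecidableEq E] {k : ℕ}
    (f : (E → Option (Fin k)) → ℝ) :
    KSubmodular f ↔ OrthantSubmodular f ∧ PairwiseMonotone f :=
  ⟨fun hf => ⟨hf.orthantSubmodular, hf.pairwiseMonotone⟩,
    fun ⟨hOS, hPM⟩ => hOS.ksubmodular hPM⟩
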